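/- arXiv:2605.01919 — 2 statements merged into one kernel-verified Lean document; each statement's English description precedes it below -/
import Mathlib

section
/- Let d = 2 or d = 3, let (p₁, s₁), …, (pₙ, sₙ) be a realizable finite family of signed distance samples in ℝ^d, and let p ∈ ℝ^d. Then the set V = { s ∈ ℝ : the family augmented by the sample (p, s) is realizable } is nonempty and contains an element s* of minimum absolute value, i.e. there exists s* ∈ V with |s*| ≤ |s| for all s ∈ V. -/
/-!
Every realization `Z` of the samples has its frontier in the closed set `B` of points at
distance at least `|sᵢ|` from each `pᵢ` and outside the interior of the union of the balls
`closedBall pᵢ |sᵢ|` with `sᵢ < 0`. Conversely every `b ∈ B` lies on the frontier of some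
realization: if `b ∉ Z`, add the point `b` to `Z`; if `b` is interior to `Z`, remove from `Z` a
small ball around `b` minus those balls and minus `b` itself, so that `b` stays in the new set
but becomes a limit of its complement. So every admissible value at a new point `x` has absolute
value `infDist x ∂Z ≥ infDist x B`, with equality for a realization through a point of `B`
nearest to `x`, which exists because `ℝ^d` is proper.
-/

open Classical in
/-- A finite family of signed distance samples `(p i, s i)` in `ℝ^d` is *realizable*
(a valid discrete SDF) if there is a closed set `Z ⊆ ℝ^d` with nonempty frontier `Ω = ∂Z`
such that each `s i` is the signed distance from `p i` to `Ω` (negative inside `Z`). -/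
def Realizable {d : ℕ} {ι : Type} (p : ι → EuclideanSpace ℝ (Fin d)) (s : ι → ℝ) : Prop :=
  ∃ Z : Set (EuclideanSpace ℝ (Fin d)), IsClosed Z ∧ (frontier Z).Nonempty ∧
    ∀ i, s i = if p i ∈ Z then -Metric.infDist (p i) (frontier Z)
               else Metric.infDist (p i) (frontier Z)

open Metric Set Topology

theorem IsPreconnected.inter_frontier_nonempty {X : Type*} [TopologicalSpace X] {S t : Set X}
    (hS : IsPreconnected S) (hSt : (S ∩ t).Nonempty) (hSt' : (S \ t).Nonempty) :
    (S ∩ frontier t).Nonempty := by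
  by_contra! h
  have hcover : S ⊆ interior t ∪ interior tᶜ := by
    intro x hx
    rw [interior_compl]
    by_cases hxt : x ∈ closure t
    · exact .inl (by_contra fun hi => h.subset ⟨hx, hxt, hi⟩)
    · exact .inr hxt
  rcases hS.subset_or_subset isOpen_interior isOpen_interior
      (disjoint_compl_right.mono interior_subset interior_subset) hcover with hsub | hsub
  · obtain ⟨x, hxS, hxt⟩ := hSt'
    exact hxt (interior_subset (hsub hxS))
  · obtain ⟨x, hxS, hxt⟩ := hSt
    exact interior_subset (hsub hxS) hxt

theorem nontrivial_of_frontier_nonempty {X : Type*} [TopologicalSpace X] {s : Set X}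
    (h : (frontier s).Nonempty) : Nontrivial X := by
  by_contra hX
  rw [not_nontrivial_iff_subsingleton] at hX
  have := Subsingleton.discreteTopology (α := X)
  rw [(isClopen_discrete s).frontier_eq] at h
  exact not_nonempty_empty h

theorem interior_union_singleton {X : Type*} [TopologicalSpace X] {N : Set X} (hN : IsClosed N)
    (b : X) [(𝓝[≠] b).NeBot] : interior (N ∪ {b}) = interior N :=
  interior_union_isClosed_of_interior_empty hN (interior_singleton b)

theorem frontier_union_singleton {X : Type*} [TopologicalSpace X] [T1Space X] {Z : Set X}
    (hZ : IsClosed Z) {b : X} [(𝓝[≠] b).NeBot] (hb : b ∉ Z) :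
    frontier (Z ∪ {b}) = frontier Z ∪ {b} := by
  rw [(hZ.union isClosed_singleton).frontier_eq, interior_union_singleton hZ, hZ.frontier_eq,
    union_sdiff_distrib,
    sdiff_eq_left.2 (disjoint_singleton_left.2 fun h => hb (interior_subset h))]

theorem exists_mem_frontier_dist_le {E : Type*} [NormedAddCommGroup E] [NormedSpace ℝ E]
    {Z : Set E} {x y : E} (hx : x ∉ Z) (hy : y ∈ Z) : ∃ w ∈ frontier Z, dist x w ≤ dist x y := by
  obtain ⟨w, hw, hwZ⟩ := (convex_segment x y).isPreconnected.inter_frontier_nonempty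
    ⟨y, right_mem_segment ℝ x y, hy⟩ ⟨x, left_mem_segment ℝ x y, hx⟩
  exact ⟨w, hwZ, by linarith [dist_add_dist_of_mem_segment hw, dist_nonneg (x := w) (y := y)]⟩

namespace SignedDistance

section Metric

variable {X : Type*} [PseudoMetricSpace X] {ι : Type*}

open Classical in
noncomputable def signedDist (Z : Set X) (x : X) : ℝ :=
  if x ∈ Z then -infDist x (frontier Z) else infDist x (frontier Z)

theorem abs_signedDist (Z : Set X) (x : X) : |signedDist Z x| = infDist x (frontier Z) := by
  unfold signedDist
  split_ifs <;> simp [abs_of_nonneg infDist_nonneg]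

theorem mem_of_signedDist_nonpos {Z : Set X} {x : X} (hZ : IsClosed Z)
    (hfr : (frontier Z).Nonempty) (h : signedDist Z x ≤ 0) : x ∈ Z := by
  by_contra hx
  rw [signedDist, if_neg hx] at h
  have hx' : x ∈ closure (frontier Z) :=
    (mem_closure_iff_infDist_zero hfr).2 (le_antisymm h infDist_nonneg)
  exact hx (hZ.frontier_subset (isClosed_frontier.closure_subset hx'))

theorem notMem_interior_of_signedDist_nonneg {Z : Set X} {x : X} (hfr : (frontier Z).Nonempty)
    (h : 0 ≤ signedDist Z x) : x ∉ interior Z := by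
  intro hx
  have hpos : 0 < infDist x (frontier Z) :=
    (isClosed_frontier.notMem_iff_infDist_pos hfr).1 fun hf => hf.2 hx
  rw [signedDist, if_pos (interior_subset hx)] at h
  linarith

theorem signedDist_congr {Z Z' : Set X} {x : X} (hmem : x ∈ Z' ↔ x ∈ Z)
    (hdist : infDist x (frontier Z') = infDist x (frontier Z)) :
    signedDist Z' x = signedDist Z x := by
  unfold signedDist
  by_cases hx : x ∈ Z
  · rw [if_pos hx, if_pos (hmem.2 hx), hdist]
  · rw [if_neg hx, if_neg (mt hmem.1 hx), hdist]

structure IsRealization (Z : Set X) (p : ι → X) (s : ι → ℝ) : Prop where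
  isClosed : IsClosed Z
  frontier_nonempty : (frontier Z).Nonempty
  eq_signedDist : ∀ i, s i = signedDist Z (p i)

def clearSet (p : ι → X) (s : ι → ℝ) : Set X := {x | ∀ i, |s i| ≤ dist (p i) x}

def insideSet (p : ι → X) (s : ι → ℝ) : Set X := ⋃ i ∈ {i | s i < 0}, closedBall (p i) |s i|

def frontierCandidates (p : ι → X) (s : ι → ℝ) : Set X :=
  clearSet p s \ interior (insideSet p s)

theorem isClosed_frontierCandidates (p : ι → X) (s : ι → ℝ) :
    IsClosed (frontierCandidates p s) := by
  refine IsClosed.sdiff ?_ isOpen_interior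
  simp only [clearSet, ofPred_forall]
  exact isClosed_iInter fun i => isClosed_le continuous_const (continuous_const.dist continuous_id)

theorem isClosed_insideSet [Finite ι] (p : ι → X) (s : ι → ℝ) : IsClosed (insideSet p s) :=
  (toFinite _).isClosed_biUnion fun _ _ => isClosed_closedBall

theorem ball_subset_interior_insideSet {p : ι → X} {s : ι → ℝ} {i : ι} (hi : s i < 0) :
    ball (p i) |s i| ⊆ interior (insideSet p s) :=
  isOpen_ball.subset_interior_iff.2 fun _ hy => mem_biUnion hi (ball_subset_closedBall hy)

namespace IsRealization

variable {Z : Set X} {p : ι → X} {s : ι → ℝ}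

theorem infDist_eq (hZ : IsRealization Z p s) (i : ι) : infDist (p i) (frontier Z) = |s i| := by
  rw [hZ.eq_signedDist i, abs_signedDist]

theorem mem_of_nonpos (hZ : IsRealization Z p s) {i : ι} (hi : s i ≤ 0) : p i ∈ Z :=
  mem_of_signedDist_nonpos hZ.isClosed hZ.frontier_nonempty (hZ.eq_signedDist i ▸ hi)

theorem notMem_interior_of_nonneg (hZ : IsRealization Z p s) {i : ι} (hi : 0 ≤ s i) :
    p i ∉ interior Z :=
  notMem_interior_of_signedDist_nonneg hZ.frontier_nonempty (hZ.eq_signedDist i ▸ hi)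

theorem of_frontier_subset (hZ : IsRealization Z p s) {Z' : Set X} (hZ' : IsClosed Z')
    (hsub : frontier Z ⊆ frontier Z') (hclear : frontier Z' ⊆ clearSet p s)
    (hmem : ∀ i, p i ∈ Z' ↔ p i ∈ Z) : IsRealization Z' p s where
  isClosed := hZ'
  frontier_nonempty := hZ.frontier_nonempty.mono hsub
  eq_signedDist i := by
    refine (hZ.eq_signedDist i).trans (signedDist_congr (hmem i) ?_).symm
    refine le_antisymm (infDist_le_infDist_of_subset hsub hZ.frontier_nonempty) ?_
    rw [hZ.infDist_eq i, le_infDist (hZ.frontier_nonempty.mono hsub)]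
    exact fun y hy => hclear hy i

end IsRealization

end Metric

namespace IsRealization

variable {E : Type*} [NormedAddCommGroup E] [NormedSpace ℝ E] {ι : Type*}
  {Z : Set E} {p : ι → E} {s : ι → ℝ}

theorem abs_le_dist_of_mem_interior (hZ : IsRealization Z p s) {i : ι} (hi : 0 ≤ s i) {x : E}
    (hx : x ∈ interior Z) : |s i| ≤ dist (p i) x := by
  obtain ⟨w, hw, hwx⟩ := exists_mem_frontier_dist_le (hZ.notMem_interior_of_nonneg hi) hx
  rw [← hZ.infDist_eq i]
  exact (infDist_le_dist_of_mem (frontier_interior_subset hw)).trans hwx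

theorem insideSet_subset (hZ : IsRealization Z p s) : insideSet p s ⊆ Z := by
  refine iUnion₂_subset fun i hi => ?_
  have hball : ball (p i) |s i| ⊆ Z := by
    intro y hy
    by_contra hyZ
    obtain ⟨w, hw, hwy⟩ :=
      exists_mem_frontier_dist_le (Z := Zᶜ) (not_not_intro (hZ.mem_of_nonpos hi.le)) hyZ
    rw [frontier_compl] at hw
    have hsw : |s i| ≤ dist (p i) w := hZ.infDist_eq i ▸ infDist_le_dist_of_mem hw
    exact (hsw.trans hwy).not_gt (mem_ball'.1 hy)
  rw [← closure_ball (p i) (abs_pos.2 hi.ne).ne']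
  exact closure_minimal hball hZ.isClosed

theorem frontier_subset_frontierCandidates (hZ : IsRealization Z p s) :
    frontier Z ⊆ frontierCandidates p s := fun _ hx =>
  ⟨fun i => hZ.infDist_eq i ▸ infDist_le_dist_of_mem hx,
    fun hN => hx.2 (interior_mono hZ.insideSet_subset hN)⟩

theorem diff (hZ : IsRealization Z p s) {G : Set E} (hG : IsOpen G)
    (hGZ : closure G ⊆ interior Z) (hGN : Disjoint G (insideSet p s)) (hGp : ∀ i, p i ∉ G) :
    IsRealization (Z \ G) p s := by
  refine hZ.of_frontier_subset (hZ.isClosed.sdiff hG) ?_ ?_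
    fun i => ⟨fun h => h.1, fun h => ⟨h, hGp i⟩⟩
  · intro x hx
    rw [hZ.isClosed.frontier_eq] at hx
    rw [(hZ.isClosed.sdiff hG).frontier_eq]
    exact ⟨⟨hx.1, fun hxG => hx.2 (hGZ (subset_closure hxG))⟩,
      fun h => hx.2 (interior_mono sdiff_subset h)⟩
  · intro x hx
    rw [sdiff_eq] at hx
    rcases frontier_inter_subset Z Gᶜ hx with ⟨hxZ, -⟩ | ⟨-, hxG⟩
    · exact (hZ.frontier_subset_frontierCandidates hxZ).1
    rw [frontier_compl] at hxG
    have hxG : x ∈ closure G := frontier_subset_closure hxG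
    intro i
    rcases lt_or_ge (s i) 0 with hi | hi
    · have hxN : x ∈ closure (insideSet p s)ᶜ := closure_mono hGN.subset_compl_right hxG
      rw [closure_compl] at hxN
      exact not_lt.1 fun h => hxN (ball_subset_interior_insideSet hi (mem_ball'.2 h))
    · exact hZ.abs_le_dist_of_mem_interior hi (hGZ hxG)

theorem union_singleton [Nontrivial E] (hZ : IsRealization Z p s) {b : E}
    (hb : b ∈ clearSet p s) (hbZ : b ∉ Z) :
    IsRealization (Z ∪ {b}) p s ∧ b ∈ frontier (Z ∪ {b}) := by
  have hfr := frontier_union_singleton hZ.isClosed hbZ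
  refine ⟨hZ.of_frontier_subset (hZ.isClosed.union isClosed_singleton) (hfr ▸ subset_union_left)
    ?_ fun i => ⟨fun h => h.resolve_right fun hpb => hbZ ?_, .inl⟩, hfr ▸ .inr rfl⟩
  · rw [hfr]
    exact union_subset (fun x hx => (hZ.frontier_subset_frontierCandidates hx).1)
      (singleton_subset_iff.2 hb)
  · have hsi : |s i| ≤ 0 := by simpa [mem_singleton_iff.1 hpb] using hb i
    rw [← mem_singleton_iff.1 hpb]
    exact hZ.mem_of_nonpos (abs_nonpos_iff.1 hsi).le

theorem exists_frontier_mem_of_mem_interior [Nontrivial E] [Finite ι] (hZ : IsRealization Z p s)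
    {b : E} (hbN : b ∉ interior (insideSet p s)) (hbZ : b ∈ interior Z) :
    ∃ Z', IsRealization Z' p s ∧ b ∈ frontier Z' := by
  obtain ⟨r, hr, hrZ⟩ := nhds_basis_closedBall.mem_iff.1 (isOpen_interior.mem_nhds hbZ)
  set G := ball b r \ (insideSet p s ∪ {b})
  have hG : IsOpen G := isOpen_ball.sdiff ((isClosed_insideSet p s).union isClosed_singleton)
  have hbG : b ∈ closure G := by
    have hb' : b ∈ closure (insideSet p s ∪ {b})ᶜ := by
      rwa [closure_compl, interior_union_singleton (isClosed_insideSet p s)]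
    exact isOpen_ball.inter_closure ⟨mem_ball_self hr, hb'⟩
  have hGZ : closure G ⊆ interior Z :=
    (closure_minimal (sdiff_subset.trans ball_subset_closedBall) isClosed_closedBall).trans hrZ
  have hGp : ∀ i, p i ∉ G := by
    intro i hiG
    rcases lt_or_ge (s i) 0 with hi | hi
    · exact hiG.2 (.inl (mem_biUnion hi (mem_closedBall_self (abs_nonneg _))))
    · exact hZ.notMem_interior_of_nonneg hi (hGZ (subset_closure hiG))
  have hZG := hZ.diff hG hGZ (disjoint_sdiff_left.mono_right subset_union_left) hGp
  refine ⟨Z \ G, hZG, ?_⟩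
  rw [hZG.isClosed.frontier_eq]
  refine ⟨⟨interior_subset hbZ, fun h => h.2 (.inr rfl)⟩, fun h => ?_⟩
  obtain ⟨y, hy, hyG⟩ := mem_closure_iff.1 hbG _ isOpen_interior h
  exact (interior_subset hy).2 hyG

theorem exists_frontier_mem [Nontrivial E] [Finite ι] (hZ : IsRealization Z p s) {b : E}
    (hb : b ∈ frontierCandidates p s) : ∃ Z', IsRealization Z' p s ∧ b ∈ frontier Z' := by
  by_cases hbZ : b ∈ Z
  · by_cases hbf : b ∈ frontier Z
    · exact ⟨Z, hZ, hbf⟩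
    rw [hZ.isClosed.frontier_eq, mem_sdiff, not_and_not_right] at hbf
    exact hZ.exists_frontier_mem_of_mem_interior hb.2 (hbf hbZ)
  · exact ⟨_, hZ.union_singleton hb.1 hbZ⟩

theorem exists_infDist_frontier_eq [Nontrivial E] [ProperSpace E] [Finite ι]
    (hZ : IsRealization Z p s) (x : E) :
    ∃ Z', IsRealization Z' p s ∧ infDist x (frontier Z') = infDist x (frontierCandidates p s) := by
  obtain ⟨b, hbB, hb⟩ := (isClosed_frontierCandidates p s).exists_infDist_eq_dist
    (hZ.frontier_nonempty.mono hZ.frontier_subset_frontierCandidates) x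
  obtain ⟨Z', hZ', hbZ'⟩ := hZ.exists_frontier_mem hbB
  refine ⟨Z', hZ', le_antisymm ?_ ?_⟩
  · exact hb ▸ infDist_le_dist_of_mem hbZ'
  · exact infDist_le_infDist_of_subset hZ'.frontier_subset_frontierCandidates hZ'.frontier_nonempty

end IsRealization

theorem isRealization_snoc_iff {X : Type*} [PseudoMetricSpace X] {n : ℕ} {Z : Set X}
    {p : Fin n → X} {s : Fin n → ℝ} {x : X} {v : ℝ} :
    IsRealization Z (Fin.snoc p x) (Fin.snoc s v) ↔ IsRealization Z p s ∧ v = signedDist Z x := by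
  constructor
  · intro h
    exact ⟨⟨h.1, h.2, fun i => by simpa using h.3 i.castSucc⟩, by simpa using h.3 (Fin.last n)⟩
  · rintro ⟨h, rfl⟩
    exact ⟨h.1, h.2, Fin.lastCases (by simp) fun i => by simpa using h.3 i⟩

end SignedDistance

open SignedDistance

theorem realizable_iff_exists_isRealization {d : ℕ} {ι : Type}
    (p : ι → EuclideanSpace ℝ (Fin d)) (s : ι → ℝ) :
    Realizable p s ↔ ∃ Z, IsRealization Z p s :=
  ⟨fun ⟨Z, h₁, h₂, h₃⟩ => ⟨Z, ⟨h₁, h₂, h₃⟩⟩, fun ⟨Z, ⟨h₁, h₂, h₃⟩⟩ => ⟨Z, h₁, h₂, h₃⟩⟩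

theorem min_valid_value_exists_general (d : ℕ) (n : ℕ)
    (p : Fin n → EuclideanSpace ℝ (Fin d)) (s : Fin n → ℝ)
    (h : Realizable p s) (pt : EuclideanSpace ℝ (Fin d)) :
    ({v : ℝ | Realizable (Fin.snoc p pt) (Fin.snoc s v)}).Nonempty ∧
    ∃ sstar ∈ {v : ℝ | Realizable (Fin.snoc p pt) (Fin.snoc s v)},
      ∀ v ∈ {v : ℝ | Realizable (Fin.snoc p pt) (Fin.snoc s v)}, |sstar| ≤ |v| := by
  have hV : ∀ v, Realizable (Fin.snoc p pt) (Fin.snoc s v) ↔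
      ∃ Z, IsRealization Z p s ∧ v = signedDist Z pt := by
    simp only [realizable_iff_exists_isRealization, isRealization_snoc_iff, implies_true]
  obtain ⟨Z₀, hZ₀⟩ := (realizable_iff_exists_isRealization p s).1 h
  have := nontrivial_of_frontier_nonempty hZ₀.frontier_nonempty
  obtain ⟨Z, hZ, hZmin⟩ := hZ₀.exists_infDist_frontier_eq pt
  refine ⟨⟨_, (hV _).2 ⟨Z₀, hZ₀, rfl⟩⟩, _, (hV _).2 ⟨Z, hZ, rfl⟩, ?_⟩
  rintro _ hv
  obtain ⟨Z', hZ', rfl⟩ := (hV _).1 hv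
  rw [abs_signedDist, abs_signedDist, hZmin]
  exact infDist_le_infDist_of_subset hZ'.frontier_subset_frontierCandidates hZ'.frontier_nonempty

/-- For `d = 2` or `d = 3`, given a realizable family and any new point `pt`, the set of
valid values at `pt` (those making the augmented family realizable) is nonempty and
contains an element of minimum absolute value. -/
theorem min_valid_value_exists (d : ℕ) (hd : d = 2 ∨ d = 3) (n : ℕ)
    (p : Fin n → EuclideanSpace ℝ (Fin d)) (s : Fin n → ℝ)
    (h : Realizable p s) (pt : EuclideanSpace ℝ (Fin d)) :
    ({v : ℝ | Realizable (Fin.snoc p pt) (Fin.snoc s v)}).Nonempty ∧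
    ∃ sstar ∈ {v : ℝ | Realizable (Fin.snoc p pt) (Fin.snoc s v)},
      ∀ v ∈ {v : ℝ | Realizable (Fin.snoc p pt) (Fin.snoc s v)}, |sstar| ≤ |v| :=
  min_valid_value_exists_general d n p s h pt
end

section
/- Let c₁, …, cₙ ∈ ℝ² and r₁, …, rₙ ≥ 0, let A = ⋃ᵢ B(cᵢ, rᵢ) be the union of the closed balls, and let p ∈ A with p ≠ cᵢ for all i. Let q be any point of the closure of ℝ² \ A with ‖p − q‖ = dist(p, ℝ² \ A). Then either there exist an index i and a sign ε ∈ {−1, 1} with q = cᵢ + ε·rᵢ·(p − cᵢ)/‖p − cᵢ‖ (a radial tangent point of the i-th sphere with respect to p), or there exist indices i ≠ j with ‖q − cᵢ‖ = rᵢ and ‖q − cⱼ‖ = rⱼ (an intersection point of two spheres). -/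
/-!
Since `A` is closed, the nearest point `q` of `closure Aᶜ` lies in `A`: otherwise it would be an
interior point of `closure Aᶜ`, and an interior local minimum of `x ↦ dist x p` can only be `p`.
Being in no open ball, `q` then lies on a sphere `∂B(cᵢ, rᵢ)`. If no other sphere passes through
`q`, the other balls stay away from `q`, so near `q` the whole sphere `∂B(cᵢ, rᵢ)` lies in
`closure Aᶜ` and `q` is a local minimum of the distance to `p` on that sphere. The Lagrange
multiplier rule makes `q - p` parallel to `q - cᵢ`, so `q` is on the line through `cᵢ` and `p`.
-/

open Metric Set Topology RealInnerProductSpace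

section Balls

theorem isMinOn_dist_closure_of_dist_eq_infDist {X : Type*} [PseudoMetricSpace X] {s : Set X}
    {p q : X} (h : dist p q = infDist p s) : IsMinOn (fun x => dist x p) (closure s) q :=
  fun x hx => by
    show dist q p ≤ dist x p
    rw [dist_comm q, dist_comm x, h, ← infDist_closure]
    exact infDist_le_dist_of_mem hx

theorem le_dist_of_mem_closure_compl {X : Type*} [PseudoMetricSpace X] {A : Set X} {c q : X}
    {r : ℝ} (hA : closedBall c r ⊆ A) (hq : q ∈ closure Aᶜ) : r ≤ dist q c := by
  rw [closure_compl] at hq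
  by_contra! h
  exact hq (isOpen_ball.subset_interior_iff.mpr (ball_subset_closedBall.trans hA) h)

variable {E : Type*} [NormedAddCommGroup E] [NormedSpace ℝ E]

theorem sphere_diff_subset_closure_compl {A F : Set E} {c : E} {r : ℝ} (hr : r ≠ 0)
    (hF : IsClosed F) (hA : A ⊆ closedBall c r ∪ F) : sphere c r \ F ⊆ closure Aᶜ := by
  rintro x ⟨hx, hxF⟩
  have hx' : x ∈ closure (closedBall c r)ᶜ := by
    rw [closure_compl, interior_closedBall c hr]
    exact fun h => (mem_ball.mp h).ne (mem_sphere.mp hx)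
  refine closure_mono ?_ (hF.isOpen_compl.inter_closure ⟨hxF, hx'⟩)
  rw [inter_comm, ← compl_union]
  exact compl_subset_compl.mpr hA

theorem IsMinOn.isLocalMinOn_sphere_of_iUnion_closedBall {ι : Type*} [Finite ι] {f : E → ℝ}
    {c : ι → E} {r : ι → ℝ} {i : ι} {q : E} (hri : r i ≠ 0)
    (hfar : ∀ j ≠ i, r j < dist q (c j))
    (hmin : IsMinOn f (closure (⋃ j, closedBall (c j) (r j))ᶜ) q) :
    IsLocalMinOn f (sphere (c i) (r i)) q := by
  set F := ⋃ (j) (_ : j ≠ i), closedBall (c j) (r j)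
  have hF : IsClosed F :=
    isClosed_iUnion_of_finite fun j => isClosed_iUnion_of_finite fun _ => isClosed_closedBall
  have hqF : q ∉ F := by
    simp only [F, mem_iUnion, not_exists, mem_closedBall, not_le]
    exact hfar
  have hsplit : ⋃ j, closedBall (c j) (r j) ⊆ closedBall (c i) (r i) ∪ F := by
    refine iUnion_subset fun j => ?_
    rcases eq_or_ne j i with rfl | hji
    · exact subset_union_left
    · exact fun x hx => Or.inr (mem_iUnion₂.mpr ⟨j, hji, hx⟩)
  have := (hmin.on_subset (sphere_diff_subset_closure_compl hri hF hsplit)).localize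
  rwa [IsLocalMinOn, sdiff_eq, ← nhdsWithin_restrict' _ (hF.isOpen_compl.mem_nhds hqF)] at this

theorem exists_sign_eq_add_smul_of_sub_eq_smul {p c q : E} {μ : ℝ} (hpc : p ≠ c)
    (hμ : p - c = μ • (q - c)) :
    ∃ ε : ℝ, (ε = 1 ∨ ε = -1) ∧ q = c + ((ε * ‖q - c‖) / ‖p - c‖) • (p - c) := by
  have hμ0 : μ ≠ 0 := by rintro rfl; simp [sub_eq_zero, hpc] at hμ
  have hqc : ‖q - c‖ ≠ 0 := by rintro h; simp [norm_eq_zero.mp h, sub_eq_zero, hpc] at hμ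
  have hq : ∀ ε : ℝ, ε * μ = |μ| → q = c + ((ε * ‖q - c‖) / ‖p - c‖) • (p - c) := by
    intro ε hε
    have hε0 : ε ≠ 0 := by rintro rfl; exact hμ0 (abs_eq_zero.mp (by linarith))
    have hscalar : (ε * ‖q - c‖) / ‖p - c‖ * μ = 1 := by
      rw [hμ, norm_smul, Real.norm_eq_abs, ← hε]
      field_simp
    calc q = c + ((ε * ‖q - c‖) / ‖p - c‖ * μ) • (q - c) := by
          rw [hscalar, one_smul, add_sub_cancel]
      _ = c + ((ε * ‖q - c‖) / ‖p - c‖) • (p - c) := by rw [mul_smul, ← hμ]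
  rcases hμ0.lt_or_gt with hneg | hpos
  · exact ⟨-1, Or.inr rfl, hq _ (by rw [abs_of_neg hneg]; ring)⟩
  · exact ⟨1, Or.inl rfl, hq _ (by rw [abs_of_pos hpos]; ring)⟩

end Balls

theorem IsLocalMinOn.norm_sub_sq {X : Type*} [SeminormedAddCommGroup X] {s : Set X} {p q : X}
    (h : IsLocalMinOn (fun x => dist x p) s q) : IsLocalMinOn (fun x => ‖x - p‖ ^ 2) s q :=
  Filter.Eventually.mono h fun x hx => by
    simpa only [dist_eq_norm] using pow_le_pow_left₀ dist_nonneg hx 2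

section DistanceMinimizers

variable {F : Type*} [NormedAddCommGroup F] [InnerProductSpace ℝ F]

theorem hasStrictFDerivAt_norm_sub_sq (p q : F) :
    HasStrictFDerivAt (fun x => ‖x - p‖ ^ 2) (2 • innerSL ℝ (q - p)) q := by
  simpa using (hasStrictFDerivAt_norm_sq (q - p)).comp q ((hasStrictFDerivAt_id q).sub_const p)

theorem eq_of_isLocalMin_dist {p q : F} (h : IsLocalMin (fun x => dist x p) q) : q = p := by
  have h' : IsLocalMin (fun x => ‖x - p‖ ^ 2) q := by
    simpa only [← isLocalMinOn_univ_iff] using (h.on univ).norm_sub_sq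
  have hzero := congrArg (· (q - p))
    (h'.hasFDerivAt_eq_zero (hasStrictFDerivAt_norm_sub_sq p q).hasFDerivAt)
  simp only [smul_apply, innerSL_apply_apply, real_inner_self_eq_norm_sq, zero_apply,
    smul_eq_zero] at hzero
  simpa [sub_eq_zero] using hzero

theorem mem_of_isMinOn_dist_closure_compl {A : Set F} {p q : F} (hA : IsClosed A) (hp : p ∈ A)
    (hmin : IsMinOn (fun x => dist x p) (closure Aᶜ) q) : q ∈ A := by
  by_contra hqA
  have hnhds : closure Aᶜ ∈ 𝓝 q :=
    Filter.mem_of_superset (hA.isOpen_compl.mem_nhds hqA) subset_closure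
  exact hqA (eq_of_isLocalMin_dist (hmin.isLocalMin hnhds) ▸ hp)

theorem exists_sub_eq_smul_of_isLocalMinOn_sphere [CompleteSpace F] {p c q : F} {r : ℝ}
    (hqc : q ≠ c) (hq : q ∈ sphere c r) (h : IsLocalMinOn (fun x => dist x p) (sphere c r) q) :
    ∃ μ : ℝ, p - c = μ • (q - c) := by
  have hsphere : sphere c r = {x | ‖x - c‖ ^ 2 = ‖q - c‖ ^ 2} := by
    ext x
    rw [mem_sphere_iff_norm.mp hq]
    simp [sq_eq_sq₀ (norm_nonneg _) (mem_sphere_iff_norm.mp hq ▸ norm_nonneg _)]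
  rw [hsphere] at h
  obtain ⟨a, b, hab, hlag⟩ := IsLocalExtrOn.exists_multipliers_of_hasStrictFDerivAt_1d
    (Or.inl h.norm_sub_sq) (hasStrictFDerivAt_norm_sub_sq c q) (hasStrictFDerivAt_norm_sub_sq p q)
  obtain ⟨v, hv_def⟩ : ∃ v, v = a • (q - c) + b • (q - p) := ⟨_, rfl⟩
  have hv : v = 0 := by
    have hlag_v := congrArg (· v) hlag
    simp only [add_apply, smul_apply, innerSL_apply_apply, zero_apply, smul_eq_mul,
      nsmul_eq_mul, Nat.cast_ofNat] at hlag_v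
    have hvv : ⟪v, v⟫ = a * ⟪q - c, v⟫ + b * ⟪q - p, v⟫ := by
      nth_rw 1 [hv_def]
      rw [inner_add_left, real_inner_smul_left, real_inner_smul_left]
    rw [← inner_self_eq_zero (𝕜 := ℝ)]
    linarith
  have hb : b ≠ 0 := by
    rintro rfl
    have ha : a ≠ 0 := by simpa using hab
    simp [hv_def, ha, sub_eq_zero, hqc] at hv
  refine ⟨1 + a / b, ?_⟩
  rw [hv] at hv_def
  linear_combination (norm := skip) b⁻¹ • hv_def
  match_scalars <;> field_simp <;> ring

end DistanceMinimizers

theorem closest_contour_point_tangent_or_intersection_general (n : ℕ)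
    (c : Fin n → EuclideanSpace ℝ (Fin 2)) (r : Fin n → ℝ)
    (A : Set (EuclideanSpace ℝ (Fin 2)))
    (hA : A = ⋃ i : Fin n, Metric.closedBall (c i) (r i))
    (p : EuclideanSpace ℝ (Fin 2)) (hp : p ∈ A) (hpc : ∀ i, p ≠ c i)
    (q : EuclideanSpace ℝ (Fin 2)) (hq : q ∈ closure Aᶜ)
    (hdist : dist p q = Metric.infDist p Aᶜ) :
    (∃ i : Fin n, ∃ ε : ℝ, (ε = 1 ∨ ε = -1) ∧
        q = c i + ((ε * r i) / ‖p - c i‖) • (p - c i)) ∨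
    (∃ i j : Fin n, i ≠ j ∧ dist q (c i) = r i ∧ dist q (c j) = r j) := by
  subst hA
  have houtside : ∀ j, r j ≤ dist q (c j) :=
    fun j => le_dist_of_mem_closure_compl (subset_iUnion_of_subset j le_rfl) hq
  have hmin := isMinOn_dist_closure_of_dist_eq_infDist hdist
  obtain ⟨i, hi⟩ := mem_iUnion.mp <| mem_of_isMinOn_dist_closure_compl
    (isClosed_iUnion_of_finite fun _ => isClosed_closedBall) hp hmin
  have hqi : dist q (c i) = r i := (mem_closedBall.mp hi).antisymm (houtside i)
  by_cases htwo : ∃ j, j ≠ i ∧ dist q (c j) = r j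
  · obtain ⟨j, hji, hj⟩ := htwo
    exact Or.inr ⟨i, j, hji.symm, hqi, hj⟩
  push Not at htwo
  left
  rcases (dist_nonneg.trans_eq hqi).eq_or_lt with hri | hri
  · exact ⟨i, 1, Or.inl rfl, by simp [dist_eq_zero.mp (hqi.trans hri.symm), ← hri]⟩
  have hloc := hmin.isLocalMinOn_sphere_of_iUnion_closedBall hri.ne'
    (fun j hji => (houtside j).lt_of_ne (htwo j hji).symm)
  have hqc : q ≠ c i := by rintro rfl; simp [← hqi] at hri
  obtain ⟨μ, hμ⟩ := exists_sub_eq_smul_of_isLocalMinOn_sphere hqc hqi hloc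
  obtain ⟨ε, hε, hq'⟩ := exists_sign_eq_add_smul_of_sub_eq_smul (hpc i) hμ
  exact ⟨i, ε, hε, by rwa [← dist_eq_norm, hqi] at hq'⟩

/-- The closest point to `p` on the contour of a finite union of closed balls in `ℝ²` is
either a radial tangent point of one of the balls (with respect to `p`) or an
intersection point of two of the spheres. -/
theorem closest_contour_point_tangent_or_intersection (n : ℕ)
    (c : Fin n → EuclideanSpace ℝ (Fin 2)) (r : Fin n → ℝ) (hr : ∀ i, 0 ≤ r i)
    (A : Set (EuclideanSpace ℝ (Fin 2)))
    (hA : A = ⋃ i : Fin n, Metric.closedBall (c i) (r i))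
    (p : EuclideanSpace ℝ (Fin 2)) (hp : p ∈ A) (hpc : ∀ i, p ≠ c i)
    (q : EuclideanSpace ℝ (Fin 2)) (hq : q ∈ closure Aᶜ)
    (hdist : dist p q = Metric.infDist p Aᶜ) :
    (∃ i : Fin n, ∃ ε : ℝ, (ε = 1 ∨ ε = -1) ∧
        q = c i + ((ε * r i) / ‖p - c i‖) • (p - c i)) ∨
    (∃ i j : Fin n, i ≠ j ∧ dist q (c i) = r i ∧ dist q (c j) = r j) :=
  closest_contour_point_tangent_or_intersection_general n c r A hA p hp hpc q hq hdist
end
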